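/- arXiv:1410.7864 — 2 statements merged into one kernel-verified Lean document; each statement's English description precedes it below -/
import Mathlib

section
/- Let U be a connected open subset of ℝⁿ with n ≥ 4, ω a smooth differential 2-form on U, and suppose the set of points where ω ∧ ω = 0 (i.e. where the rank of ω is at most 1) is nowhere dense in U. If β and β' are continuous differential 1-forms on U with β ∧ ω = β' ∧ ω, then β = β'. In particular, a 1-form β satisfying dω = β ∧ ω is unique. -/
set_option synthInstance.maxHeartbeats 1000000
set_option maxHeartbeats 1000000

noncomputable section

open ExteriorAlgebra

/-! ### Preamble: differential forms on open subsets of `ℝⁿ`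

A (inhomogeneous) differential form on (an open subset of) `ℝⁿ` is modelled as a map from
`ℝⁿ = Fin n → ℝ` into the exterior algebra `ExteriorAlgebra ℝ (Module.Dual ℝ (Fin n → ℝ))`
of the dual space; a differential `k`-form takes values in the `k`-th exterior power
`⋀[ℝ]^k (Module.Dual ℝ (Fin n → ℝ))`.  The wedge product is multiplication in the exterior
algebra.  To speak about continuity and differentiability we endow this (finite-dimensional)
exterior algebra with a norm, induced by a linear equivalence with `ℝ^d`; all norms on a
finite-dimensional real vector space are equivalent, so the resulting notions of continuous
and smooth differential forms do not depend on this choice.  The exterior derivative is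
defined by the classical coordinate formula `dω = ∑ᵢ dxⁱ ∧ ∂ᵢω`. -/

/-- The `i`-th exterior power of a finite-dimensional space vanishes for `i` larger
than the dimension. -/
theorem exteriorPower_eq_bot_of_finrank_lt {V : Type*} [AddCommGroup V] [Module ℝ V]
    [FiniteDimensional ℝ V] {i : ℕ} (hi : Module.finrank ℝ V < i) :
    ⋀[ℝ]^i V = ⊥ := by
  rw [← ιMulti_span_fixedDegree, Submodule.span_eq_bot]
  rintro x ⟨v, rfl⟩
  refine AlternatingMap.map_linearDependent _ v (fun h => ?_)
  have := h.fintype_card_le_finrank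
  simp only [Fintype.card_fin] at this
  omega

/-- The exterior algebra of a finite-dimensional real vector space is finite-dimensional. -/
instance instFiniteExteriorAlgebra {V : Type*} [AddCommGroup V] [Module ℝ V]
    [FiniteDimensional ℝ V] : Module.Finite ℝ (ExteriorAlgebra ℝ V) := by
  classical
  rw [Module.finite_def]
  set m := Module.finrank ℝ V
  have hfg : ∀ i : ℕ, (⋀[ℝ]^i V).FG := by
    intro i
    induction i with
    | zero =>
      rw [exteriorPower, pow_zero, Submodule.one_eq_span]
      exact Submodule.fg_span_singleton _
    | succ j ih =>
      rw [exteriorPower, pow_succ]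
      exact Submodule.FG.mul ih
        (by rw [← Submodule.map_top]; exact Submodule.FG.map _ Module.Finite.fg_top)
  set F : Submodule ℝ (ExteriorAlgebra ℝ V) := ∑ i ∈ Finset.range (m + 1), ⋀[ℝ]^i V with hF
  have hFfg : F.FG := by
    rw [hF]
    classical
    induction (Finset.range (m + 1)) using Finset.cons_induction with
    | empty => simpa using Submodule.fg_bot
    | cons a s ha ih =>
      rw [Finset.sum_cons, Submodule.add_eq_sup]
      exact Submodule.FG.sup (hfg a) ih
  have hle : ∀ i : ℕ, ⋀[ℝ]^i V ≤ F := by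
    intro i
    by_cases h : i ≤ m
    · exact Finset.single_le_sum (f := fun i => ⋀[ℝ]^i V) (fun j _ => bot_le)
        (Finset.mem_range.2 (by omega))
    · rw [exteriorPower_eq_bot_of_finrank_lt (by omega)]
      exact bot_le
  have htop : (⊤ : Submodule ℝ (ExteriorAlgebra ℝ V)) ≤ F := by
    intro x _
    rw [← DirectSum.sum_support_decompose (fun i : ℕ => ⋀[ℝ]^i V) x]
    exact Submodule.sum_mem _ fun i _ => hle i (DirectSum.decompose (fun i : ℕ => ⋀[ℝ]^i V) x i).2
  exact top_le_iff.mp htop ▸ hFfg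

/-- The algebra of (inhomogeneous) exterior forms on `ℝⁿ`: the exterior algebra of the
dual space of `ℝⁿ`.  A `k`-form on `ℝⁿ` is an element of the submodule
`⋀[ℝ]^k (Module.Dual ℝ (Fin n → ℝ))`. -/
abbrev FormAlgebra (n : ℕ) : Type := ExteriorAlgebra ℝ (Module.Dual ℝ (Fin n → ℝ))

/-- A norm on the (finite-dimensional) algebra of exterior forms on `ℝⁿ`, transported from
`ℝ^d` by a linear equivalence.  All norms on a finite-dimensional real space are equivalent,
so continuity/smoothness of form-valued maps does not depend on this choice. -/
instance instNormedFormAlgebra (n : ℕ) : NormedAddCommGroup (FormAlgebra n) :=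
  NormedAddCommGroup.induced _ _ ((Module.finBasis ℝ (FormAlgebra n)).equivFun.toLinearMap)
    (Module.finBasis ℝ (FormAlgebra n)).equivFun.injective

instance instNormedSpaceFormAlgebra (n : ℕ) : NormedSpace ℝ (FormAlgebra n) :=
  NormedSpace.induced ℝ _ _ ((Module.finBasis ℝ (FormAlgebra n)).equivFun.toLinearMap)

/-- The coordinate 1-forms `dxⁱ` on `ℝⁿ`. -/
def dx {n : ℕ} (i : Fin n) : FormAlgebra n := ExteriorAlgebra.ι ℝ (LinearMap.proj i)

/-- The exterior derivative of a form-valued map on `ℝⁿ`, via the classical coordinate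
formula `dω = ∑ᵢ dxⁱ ∧ ∂ᵢω` (where `∂ᵢ` is the partial derivative in the direction of the
`i`-th standard basis vector). -/
def coordExtDeriv {n : ℕ} (ω : (Fin n → ℝ) → FormAlgebra n) (x : Fin n → ℝ) : FormAlgebra n :=
  ∑ i : Fin n, dx i * fderiv ℝ ω x (Pi.single i 1)

end

/-!
At a point where `ω ∧ ω ≠ 0`, the 1-form `γ = β - β'` satisfies `γ ∧ ω = 0`. If `γ ≠ 0`,
contracting with a covector `f` with `f γ = 1` gives `ω = γ ∧ ι_f ω`, so `ω` is decomposable and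
`ω ∧ ω = 0`; hence `β = β'` there. These points are dense in `U` because their complement is
nowhere dense, and continuity of `β`, `β'` extends the equality to all of `U`.
-/

namespace ExteriorAlgebra

open CliffordAlgebra

section CommRing

variable {R M : Type*} [CommRing R] [AddCommGroup M] [Module R M]

theorem contractLeft_mem_range_ι_of_mem_exteriorPower_two (f : Module.Dual R M)
    {Ω : ExteriorAlgebra R M} (hΩ : Ω ∈ ⋀[R]^2 M) :
    contractLeft (Q := 0) f Ω ∈ LinearMap.range (ι R (M := M)) := by
  rw [← ιMulti_span_fixedDegree] at hΩ
  induction hΩ using Submodule.span_induction with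
  | mem x hx =>
    obtain ⟨w, rfl⟩ := hx
    have hw : ιMulti R 2 w = ι R (w 0) * ι R (w 1) := by
      simp [ιMulti_apply, Matrix.vecTail]
    refine ⟨f (w 0) • w 1 - f (w 1) • w 0, ?_⟩
    rw [hw, contractLeft_ι_mul, contractLeft_ι, map_sub, map_smul, map_smul]
    simp only [Algebra.smul_def, Algebra.commutes]
  | zero => simp
  | add x y _ _ hx hy => rw [map_add]; exact add_mem hx hy
  | smul r x _ hx => rw [map_smul]; exact Submodule.smul_mem _ _ hx

theorem ι_mul_ι_mul_self (v w : M) : ι R v * ι R w * (ι R v * ι R w) = 0 := by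
  have hswap : ι R w * ι R v = -(ι R v * ι R w) :=
    eq_neg_of_add_eq_zero_left (ι_add_mul_swap w v)
  calc ι R v * ι R w * (ι R v * ι R w) = ι R v * (ι R w * ι R v) * ι R w := by noncomm_ring
    _ = -(ι R v * ι R v * (ι R w * ι R w)) := by rw [hswap]; noncomm_ring
    _ = 0 := by rw [ι_sq_zero, zero_mul, neg_zero]

end CommRing

section Field

variable {K V : Type*} [Field K] [AddCommGroup V] [Module K V]

theorem exists_eq_ι_mul_ι_of_ι_mul_eq_zero {v : V} (hv : v ≠ 0) {Ω : ExteriorAlgebra K V}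
    (hΩ : Ω ∈ ⋀[K]^2 V) (h : ι K v * Ω = 0) : ∃ w, Ω = ι K v * ι K w := by
  obtain ⟨f, hf⟩ : ∃ f : Module.Dual K V, f v = 1 := by
    obtain ⟨f, hf⟩ := Module.exists_dual_forall_apply_eq_one (s := {()}) (v := fun _ => v)
      (LinearIndepOn.singleton (R := K) hv)
    exact ⟨f, hf () rfl⟩
  obtain ⟨w, hw⟩ := contractLeft_mem_range_ι_of_mem_exteriorPower_two f hΩ
  refine ⟨w, ?_⟩
  have := congrArg (contractLeft (Q := 0) f) h
  rwa [map_zero, contractLeft_ι_mul, hf, one_smul, sub_eq_zero, ← hw] at this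

theorem eq_of_mul_eq_mul_of_sq_ne_zero {β β' Ω : ExteriorAlgebra K V} (hβ : β ∈ ⋀[K]^1 V)
    (hβ' : β' ∈ ⋀[K]^1 V) (hΩ : Ω ∈ ⋀[K]^2 V) (h : β * Ω = β' * Ω) (hΩΩ : Ω ^ 2 ≠ 0) :
    β = β' := by
  obtain ⟨v, hv⟩ : β - β' ∈ LinearMap.range (ι K (M := V)) := by
    simpa only [exteriorPower, pow_one] using sub_mem hβ hβ'
  rw [← sub_eq_zero, ← hv]
  by_contra hne
  have hv0 : v ≠ 0 := by rintro rfl; exact hne (map_zero _)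
  obtain ⟨w, rfl⟩ := exists_eq_ι_mul_ι_of_ι_mul_eq_zero hv0 hΩ (by rw [hv, sub_mul, h, sub_self])
  exact hΩΩ (by rw [sq, ι_mul_ι_mul_self])

end Field

end ExteriorAlgebra

theorem Set.EqOn.of_eqOn_diff_isNowhereDense {X Y : Type*} [TopologicalSpace X]
    [TopologicalSpace Y] [T2Space Y] {U S : Set X} {f g : X → Y} (hU : IsOpen U)
    (hS : IsNowhereDense S) (hf : ContinuousOn f U) (hg : ContinuousOn g U)
    (h : EqOn f g (U \ S)) : EqOn f g U := by
  have hdense : Dense Sᶜ :=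
    (interior_eq_empty_iff_dense_compl.1 hS).mono (compl_subset_compl.2 subset_closure)
  exact h.of_subset_closure hf hg sdiff_subset (hdense.open_subset_closure_inter hU)

theorem statement13_general (n : ℕ) (U : Set (Fin n → ℝ)) (hU : IsOpen U)
    (ω : (Fin n → ℝ) → FormAlgebra n)
    (hω2 : ∀ x ∈ U, ω x ∈ ⋀[ℝ]^2 (Module.Dual ℝ (Fin n → ℝ)))
    (hnd : IsNowhereDense {x | x ∈ U ∧ ω x ^ 2 = 0})
    (β β' : (Fin n → ℝ) → FormAlgebra n)
    (hβ1 : ∀ x ∈ U, β x ∈ ⋀[ℝ]^1 (Module.Dual ℝ (Fin n → ℝ)))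
    (hβ'1 : ∀ x ∈ U, β' x ∈ ⋀[ℝ]^1 (Module.Dual ℝ (Fin n → ℝ)))
    (hβc : ContinuousOn β U) (hβ'c : ContinuousOn β' U)
    (heq : ∀ x ∈ U, β x * ω x = β' x * ω x) :
    Set.EqOn β β' U := by
  refine Set.EqOn.of_eqOn_diff_isNowhereDense hU hnd hβc hβ'c fun x ⟨hxU, hx⟩ => ?_
  exact ExteriorAlgebra.eq_of_mul_eq_mul_of_sq_ne_zero (hβ1 x hxU) (hβ'1 x hxU) (hω2 x hxU)
    (heq x hxU) fun h => hx ⟨hxU, h⟩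

theorem statement13 (n : ℕ) (hn : 4 ≤ n) (U : Set (Fin n → ℝ)) (hU : IsOpen U)
    (hconn : IsConnected U)
    (ω : (Fin n → ℝ) → FormAlgebra n)
    (hω2 : ∀ x ∈ U, ω x ∈ ⋀[ℝ]^2 (Module.Dual ℝ (Fin n → ℝ)))
    (hωs : ContDiffOn ℝ (⊤ : ℕ∞) ω U)
    (hnd : IsNowhereDense {x | x ∈ U ∧ ω x ^ 2 = 0})
    (β β' : (Fin n → ℝ) → FormAlgebra n)
    (hβ1 : ∀ x ∈ U, β x ∈ ⋀[ℝ]^1 (Module.Dual ℝ (Fin n → ℝ)))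
    (hβ'1 : ∀ x ∈ U, β' x ∈ ⋀[ℝ]^1 (Module.Dual ℝ (Fin n → ℝ)))
    (hβc : ContinuousOn β U) (hβ'c : ContinuousOn β' U)
    (heq : ∀ x ∈ U, β x * ω x = β' x * ω x) :
    Set.EqOn β β' U :=
  statement13_general n U hU ω hω2 hnd β β' hβ1 hβ'1 hβc hβ'c heq
end

section
/- Let U be an open subset of ℝⁿ with n = 2m + 1 ≥ 7 odd, η a smooth closed 1-form on U, Φ a smooth 2-form on U such that η ∧ Φ^{∧m} is nowhere zero, and α a smooth function on U satisfying dΦ = 2α η ∧ Φ. Then the 1-form 2αη is closed; equivalently dα ∧ η = 0 at every point of U, so dα is pointwise proportional to η. -/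
set_option synthInstance.maxHeartbeats 1000000
set_option maxHeartbeats 1000000

noncomputable section

open ExteriorAlgebra

/-- The exterior derivative of a form-valued map on `ℝⁿ`, via the classical coordinate
formula `dω = ∑ᵢ dxⁱ ∧ ∂ᵢω` (where `∂ᵢ` is the partial derivative in the direction of the
`i`-th standard basis vector). -/
def extDeriv' {n : ℕ} (ω : (Fin n → ℝ) → FormAlgebra n) (x : Fin n → ℝ) : FormAlgebra n :=
  ∑ i : Fin n, dx i * fderiv ℝ ω x (Pi.single i 1)

end


/-! Differentiating `dΦ = 2α η ∧ Φ` gives `0 = d²Φ = 2 dα ∧ η ∧ Φ`, because `η ∧ Φ` is closed: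
`d(η ∧ Φ) = dη ∧ Φ - η ∧ dΦ` and `η ∧ dΦ = 2α η ∧ η ∧ Φ = 0`.

Pointwise, if `a ∧ b ∧ Φ = 0` and `b ∧ Φᵐ ≠ 0` with `m ≥ 2`, then `a ∧ b = 0`. Otherwise choose
`f` with `f a = 1`, `f b = 0`; contracting with `f` gives `b ∧ Φ = -a ∧ b ∧ (f ⌟ Φ)`, so
`b ∧ Φᵐ = -(f ⌟ Φ) ∧ Φᵐ⁻² ∧ (a ∧ b ∧ Φ) = 0` since the 2-vector `a ∧ b` is central.
Hence `dα ∧ η = 0`, so `dα` is a multiple of `η ≠ 0`, and `d(2αη) = 2 dα ∧ η + 2α dη = 0`. -/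

open ExteriorAlgebra

section Wedge

variable {K V : Type*} [Field K] [AddCommGroup V] [Module K V]

theorem ι_mul_ι_anticomm (a b : V) : ι K a * ι K b = -(ι K b * ι K a) :=
  eq_neg_of_add_eq_zero_left (ι_add_mul_swap a b)

theorem commute_ι_mul_ι (a b : V) (z : ExteriorAlgebra K V) : Commute (ι K a * ι K b) z := by
  induction z using ExteriorAlgebra.induction with
  | algebraMap r => exact (Algebra.commutes r _).symm
  | ι v =>
    simp only [Commute, SemiconjBy, mul_assoc]
    rw [ι_mul_ι_anticomm b v, mul_neg, ← mul_assoc, ι_mul_ι_anticomm a v, neg_mul, neg_neg,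
      mul_assoc]
  | add x y hx hy => exact hx.add_right hy
  | mul x y hx hy => exact hx.mul_right hy

theorem exists_dual_eq_one_eq_zero_of_notMem_span_singleton {a b : V} (h : a ∉ K ∙ b) :
    ∃ f : Module.Dual K V, f a = 1 ∧ f b = 0 := by
  obtain ⟨f, hfa, hf⟩ := Submodule.exists_dual_map_eq_bot_of_notMem h inferInstance
  refine ⟨(f a)⁻¹ • f, inv_mul_cancel₀ hfa, ?_⟩
  have hfb : f b ∈ (K ∙ b).map f :=
    Submodule.mem_map_of_mem (Submodule.mem_span_singleton_self b)
  rw [hf, Submodule.mem_bot] at hfb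
  rw [LinearMap.smul_apply, hfb, smul_zero]

theorem contractLeft_ι_mul_ι_mul {f : Module.Dual K V} {a b : V} (ha : f a = 1) (hb : f b = 0)
    (z : ExteriorAlgebra K V) :
    CliffordAlgebra.contractLeft f (ι K a * (ι K b * z))
      = ι K b * z + ι K a * ι K b * CliffordAlgebra.contractLeft f z := by
  rw [CliffordAlgebra.contractLeft_ι_mul, CliffordAlgebra.contractLeft_ι_mul, ha, hb, one_smul,
    zero_smul, zero_sub, mul_neg, sub_neg_eq_add, mul_assoc]

theorem exists_eq_smul_of_ι_mul_ι_eq_zero {a b : V} (hb : b ≠ 0) (h : ι K a * ι K b = 0) :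
    ∃ c : K, a = c • b := by
  by_contra hspan
  replace hspan : a ∉ K ∙ b := fun h' =>
    hspan ((Submodule.mem_span_singleton.mp h').imp fun _ hc => hc.symm)
  obtain ⟨f, hfa, hfb⟩ := exists_dual_eq_one_eq_zero_of_notMem_span_singleton hspan
  have := contractLeft_ι_mul_ι_mul hfa hfb 1
  rw [CliffordAlgebra.contractLeft_one, mul_zero, add_zero, mul_one, h, map_zero,
    eq_comm, ι_eq_zero_iff] at this
  exact hb this

theorem ι_mul_ι_eq_zero_of_ι_mul_pow_ne_zero {a b : V} {Φ : ExteriorAlgebra K V} {m : ℕ}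
    (hm : 2 ≤ m) (habΦ : ι K a * (ι K b * Φ) = 0) (hbΦ : ι K b * Φ ^ m ≠ 0) :
    ι K a * ι K b = 0 := by
  by_cases hspan : a ∈ K ∙ b
  · obtain ⟨c, rfl⟩ := Submodule.mem_span_singleton.mp hspan
    rw [map_smul, smul_mul_assoc, ι_sq_zero, smul_zero]
  obtain ⟨f, hfa, hfb⟩ := exists_dual_eq_one_eq_zero_of_notMem_span_singleton hspan
  set ω := CliffordAlgebra.contractLeft f Φ
  have hbΦ' : ι K b * Φ = -(ι K a * ι K b * ω) := by
    have := contractLeft_ι_mul_ι_mul hfa hfb Φ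
    rw [habΦ, map_zero] at this
    exact eq_neg_of_add_eq_zero_left this.symm
  obtain ⟨k, rfl⟩ : ∃ k, m = k + 2 := ⟨m - 2, by omega⟩
  refine absurd ?_ hbΦ
  calc ι K b * Φ ^ (k + 2) = ι K b * Φ * Φ ^ (k + 1) := by rw [pow_succ', mul_assoc]
    _ = -(ι K a * ι K b * (ω * Φ ^ k) * Φ) := by rw [hbΦ', pow_succ]; noncomm_ring
    _ = -(ω * Φ ^ k * (ι K a * (ι K b * Φ))) := by
        rw [(commute_ι_mul_ι a b _).eq]; noncomm_ring
    _ = 0 := by rw [habΦ, mul_zero, neg_zero]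

end Wedge

namespace FormAlgebra

variable {n : ℕ}

noncomputable def mulCLM (n : ℕ) : FormAlgebra n →L[ℝ] FormAlgebra n →L[ℝ] FormAlgebra n :=
  LinearMap.toContinuousLinearMap
    (LinearMap.toContinuousLinearMap.toLinearMap ∘ₗ LinearMap.mul ℝ (FormAlgebra n))

@[simp]
theorem mulCLM_apply (a b : FormAlgebra n) : mulCLM n a b = a * b := rfl

theorem hasFDerivAt_mul {f g : (Fin n → ℝ) → FormAlgebra n} {x : Fin n → ℝ}
    {f' g' : (Fin n → ℝ) →L[ℝ] FormAlgebra n} (hf : HasFDerivAt f f' x)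
    (hg : HasFDerivAt g g' x) :
    HasFDerivAt (fun y => f y * g y)
      ((mulCLM n (f x)).comp g' + ((mulCLM n).flip (g x)).comp f') x := by
  exact ((mulCLM n).isBoundedBilinearMap.hasFDerivAt (f x, g x)).comp x (hf.prodMk hg)

noncomputable def dxWedge (n : ℕ) : ((Fin n → ℝ) →L[ℝ] FormAlgebra n) →L[ℝ] FormAlgebra n :=
  ∑ i, (mulCLM n (dx i)).comp (ContinuousLinearMap.apply ℝ (FormAlgebra n) (Pi.single i 1))

theorem dxWedge_apply (φ : (Fin n → ℝ) →L[ℝ] FormAlgebra n) :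
    dxWedge n φ = ∑ i, dx i * φ (Pi.single i 1) := by
  simp [dxWedge]

theorem dxWedge_comp_eq_zero {B : (Fin n → ℝ) →L[ℝ] (Fin n → ℝ) →L[ℝ] FormAlgebra n}
    (hB : ∀ v w, B v w = B w v) : dxWedge n ((dxWedge n).comp B) = 0 := by
  have hS : dxWedge n ((dxWedge n).comp B)
      = ∑ j, ∑ i, dx j * (dx i * B (Pi.single j 1) (Pi.single i 1)) := by
    simp only [dxWedge_apply, ContinuousLinearMap.comp_apply, Finset.mul_sum]
  have hanti : dxWedge n ((dxWedge n).comp B) = -dxWedge n ((dxWedge n).comp B) := by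
    calc dxWedge n ((dxWedge n).comp B)
        = ∑ j, ∑ i, dx i * (dx j * B (Pi.single i 1) (Pi.single j 1)) := by
          rw [hS, Finset.sum_comm]
      _ = ∑ j, ∑ i, -(dx j * (dx i * B (Pi.single j 1) (Pi.single i 1))) := by
          refine Finset.sum_congr rfl fun j _ => Finset.sum_congr rfl fun i _ => ?_
          rw [hB, ← mul_assoc, dx, dx, ι_mul_ι_anticomm, neg_mul, mul_assoc]
      _ = -dxWedge n ((dxWedge n).comp B) := by
          simp only [hS, Finset.sum_neg_distrib]
  rw [eq_neg_iff_add_eq_zero, ← two_smul ℝ] at hanti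
  exact (smul_eq_zero.mp hanti).resolve_left two_ne_zero

theorem sum_smul_dx (φ : Module.Dual ℝ (Fin n → ℝ)) :
    ∑ i, φ (Pi.single i 1) • dx i = ι ℝ φ := by
  simp only [dx, ← map_smul, ← map_sum]
  congr 1
  ext v
  simp [Pi.single_apply, mul_comm]

end FormAlgebra

open FormAlgebra

section ExtDeriv

variable {n : ℕ} {x : Fin n → ℝ}

theorem extDeriv'_eq_dxWedge (ω : (Fin n → ℝ) → FormAlgebra n) :
    extDeriv' ω x = dxWedge n (fderiv ℝ ω x) :=
  (dxWedge_apply _).symm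

theorem Filter.EventuallyEq.extDeriv'_eq {f g : (Fin n → ℝ) → FormAlgebra n}
    (h : f =ᶠ[nhds x] g) : extDeriv' f x = extDeriv' g x := by
  rw [extDeriv', extDeriv', h.fderiv_eq]

theorem extDeriv'_extDeriv' {ω : (Fin n → ℝ) → FormAlgebra n} (hω : ContDiffAt ℝ 2 ω x) :
    extDeriv' (extDeriv' ω) x = 0 := by
  have hD : HasFDerivAt (fderiv ℝ ω) (fderiv ℝ (fderiv ℝ ω) x) x :=
    ((hω.fderiv_right one_add_one_eq_two.le).differentiableAt (by simp)).hasFDerivAt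
  have hdω : HasFDerivAt (extDeriv' ω) ((dxWedge n).comp (fderiv ℝ (fderiv ℝ ω) x)) x := by
    rw [show extDeriv' ω = dxWedge n ∘ fderiv ℝ ω from funext fun _ => extDeriv'_eq_dxWedge ω]
    exact (dxWedge n).hasFDerivAt.comp x hD
  rw [extDeriv'_eq_dxWedge, hdω.fderiv]
  exact dxWedge_comp_eq_zero (hω.isSymmSndFDerivAt (by simp)).eq

theorem extDeriv'_algebraMap_comp {c : (Fin n → ℝ) → ℝ} (hc : DifferentiableAt ℝ c x) :
    extDeriv' (fun y => algebraMap ℝ (FormAlgebra n) (c y)) x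
      = ι ℝ (fderiv ℝ c x : Module.Dual ℝ (Fin n → ℝ)) := by
  have hd : HasFDerivAt (fun y => algebraMap ℝ (FormAlgebra n) (c y))
      ((Algebra.linearMap ℝ (FormAlgebra n)).toContinuousLinearMap.comp (fderiv ℝ c x)) x :=
    (Algebra.linearMap ℝ (FormAlgebra n)).toContinuousLinearMap.hasFDerivAt.comp x hc.hasFDerivAt
  rw [extDeriv', hd.fderiv, ← sum_smul_dx]
  refine Finset.sum_congr rfl fun i _ => ?_
  simp [← Algebra.commutes, Algebra.smul_def]

theorem extDeriv'_smul {c : (Fin n → ℝ) → ℝ} {ω : (Fin n → ℝ) → FormAlgebra n}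
    (hc : DifferentiableAt ℝ c x) (hω : DifferentiableAt ℝ ω x) :
    extDeriv' (fun y => c y • ω y) x
      = ι ℝ (fderiv ℝ c x : Module.Dual ℝ (Fin n → ℝ)) * ω x + c x • extDeriv' ω x := by
  rw [extDeriv', fderiv_fun_smul hc hω, extDeriv', ← sum_smul_dx, Finset.sum_mul,
    Finset.smul_sum, ← Finset.sum_add_distrib]
  refine Finset.sum_congr rfl fun i _ => ?_
  simp [mul_add, add_comm]

theorem extDeriv'_mul_of_eq_ι {f g : (Fin n → ℝ) → FormAlgebra n} {v : Module.Dual ℝ (Fin n → ℝ)}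
    (hf : DifferentiableAt ℝ f x) (hg : DifferentiableAt ℝ g x) (hv : f x = ι ℝ v) :
    extDeriv' (fun y => f y * g y) x = extDeriv' f x * g x - f x * extDeriv' g x := by
  rw [extDeriv', (hasFDerivAt_mul hf.hasFDerivAt hg.hasFDerivAt).fderiv, extDeriv', extDeriv',
    Finset.sum_mul, Finset.mul_sum, ← Finset.sum_sub_distrib]
  refine Finset.sum_congr rfl fun i _ => ?_
  have hswap : dx i * f x = -(f x * dx i) := by rw [hv, dx, ι_mul_ι_anticomm]
  simp only [_root_.add_apply, ContinuousLinearMap.comp_apply, mulCLM_apply,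
    ContinuousLinearMap.flip_apply, mul_add, ← mul_assoc, hswap]
  noncomm_ring

end ExtDeriv

theorem ι_fderiv_mul_ι_mul_eq_zero_of_extDeriv'_eq_smul {n : ℕ} {x : Fin n → ℝ}
    {η Φ : (Fin n → ℝ) → FormAlgebra n} {β : (Fin n → ℝ) → ℝ} {b : Module.Dual ℝ (Fin n → ℝ)}
    (hβ : DifferentiableAt ℝ β x) (hη : DifferentiableAt ℝ η x) (hΦ : ContDiffAt ℝ 2 Φ x)
    (hb : η x = ι ℝ b) (hηcl : extDeriv' η x = 0)
    (heq : extDeriv' Φ =ᶠ[nhds x] fun y => β y • (η y * Φ y)) :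
    ι ℝ (fderiv ℝ β x : Module.Dual ℝ (Fin n → ℝ)) * (ι ℝ b * Φ x) = 0 := by
  have hΦd : DifferentiableAt ℝ Φ x := hΦ.differentiableAt (by simp)
  have hηΦ : extDeriv' (fun y => η y * Φ y) x = 0 := by
    rw [extDeriv'_mul_of_eq_ι hη hΦd hb, hηcl, zero_mul, heq.eq_of_nhds, hb, mul_smul_comm,
      ← mul_assoc, ι_sq_zero, zero_mul, smul_zero, sub_zero]
  have hdd := extDeriv'_smul hβ (hasFDerivAt_mul hη.hasFDerivAt hΦd.hasFDerivAt).differentiableAt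
  rw [← heq.extDeriv'_eq, extDeriv'_extDeriv' hΦ, hηΦ, smul_zero, add_zero, hb] at hdd
  exact hdd.symm

theorem statement18_general (m : ℕ) (hm : 3 ≤ m) (n : ℕ)
    (U : Set (Fin n → ℝ)) (hU : IsOpen U)
    (η Φ : (Fin n → ℝ) → FormAlgebra n) (α : (Fin n → ℝ) → ℝ)
    (hη1 : ∀ x ∈ U, η x ∈ ⋀[ℝ]^1 (Module.Dual ℝ (Fin n → ℝ)))
    (hηs : ContDiffOn ℝ (⊤ : ℕ∞) η U) (hΦs : ContDiffOn ℝ (⊤ : ℕ∞) Φ U)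
    (hαs : ContDiffOn ℝ (⊤ : ℕ∞) α U)
    (hηcl : ∀ x ∈ U, extDeriv' η x = 0)
    (hvol : ∀ x ∈ U, η x * Φ x ^ m ≠ 0)
    (heq : ∀ x ∈ U, extDeriv' Φ x = (2 * α x) • (η x * Φ x)) :
    (∀ x ∈ U, extDeriv' (fun y => (2 * α y) • η y) x = 0) ∧
    (∀ x ∈ U, extDeriv' (fun y => algebraMap ℝ (FormAlgebra n) (α y)) x * η x = 0) ∧
    (∀ x ∈ U, ∃ c : ℝ,
      extDeriv' (fun y => algebraMap ℝ (FormAlgebra n) (α y)) x = c • η x) := by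
  have hα : ∀ x ∈ U, DifferentiableAt ℝ α x := fun x hx =>
    (hαs.contDiffAt (hU.mem_nhds hx)).differentiableAt (by simp)
  have hη : ∀ x ∈ U, DifferentiableAt ℝ η x := fun x hx =>
    (hηs.contDiffAt (hU.mem_nhds hx)).differentiableAt (by simp)
  have hdα : ∀ x ∈ U, extDeriv' (fun y => algebraMap ℝ (FormAlgebra n) (α y)) x
      = ι ℝ (fderiv ℝ α x : Module.Dual ℝ (Fin n → ℝ)) :=
    fun x hx => extDeriv'_algebraMap_comp (hα x hx)
  have hd2α : ∀ x ∈ U, ι ℝ (fderiv ℝ (fun y => 2 * α y) x : Module.Dual ℝ (Fin n → ℝ))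
      = (2 : ℝ) • ι ℝ (fderiv ℝ α x : Module.Dual ℝ (Fin n → ℝ)) := fun x hx => by
    rw [fderiv_const_mul (hα x hx), ContinuousLinearMap.toLinearMap_smul, map_smul]
  have hwedge : ∀ x ∈ U, ∃ b, η x = ι ℝ b ∧ b ≠ 0 ∧
      ι ℝ (fderiv ℝ α x : Module.Dual ℝ (Fin n → ℝ)) * ι ℝ b = 0 := by
    intro x hx
    obtain ⟨b, hb⟩ : η x ∈ LinearMap.range (ι ℝ) := by simpa using hη1 x hx
    have hvol' : ι ℝ b * Φ x ^ m ≠ 0 := hb ▸ hvol x hx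
    have hb0 : b ≠ 0 := by rintro rfl; simp at hvol'
    have h2 := ι_fderiv_mul_ι_mul_eq_zero_of_extDeriv'_eq_smul ((hα x hx).const_mul 2) (hη x hx)
      ((hΦs.contDiffAt (hU.mem_nhds hx)).of_le (by norm_cast)) hb.symm (hηcl x hx)
      (Filter.eventuallyEq_of_mem (hU.mem_nhds hx) heq)
    rw [hd2α x hx, smul_mul_assoc, smul_eq_zero] at h2
    exact ⟨b, hb.symm, hb0,
      ι_mul_ι_eq_zero_of_ι_mul_pow_ne_zero (by omega) (h2.resolve_left two_ne_zero) hvol'⟩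
  refine ⟨fun x hx => ?_, fun x hx => ?_, fun x hx => ?_⟩ <;>
    obtain ⟨b, hb, hb0, hαb⟩ := hwedge x hx
  · rw [extDeriv'_smul ((hα x hx).const_mul 2) (hη x hx), hηcl x hx, smul_zero, add_zero,
      hd2α x hx, smul_mul_assoc, hb, hαb, smul_zero]
  · rw [hdα x hx, hb, hαb]
  · obtain ⟨c, hc⟩ := exists_eq_smul_of_ι_mul_ι_eq_zero hb0 hαb
    exact ⟨c, by rw [hdα x hx, hb, hc, map_smul]⟩

theorem statement18 (m : ℕ) (hm : 3 ≤ m) (n : ℕ) (hn : n = 2 * m + 1)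
    (U : Set (Fin n → ℝ)) (hU : IsOpen U)
    (η Φ : (Fin n → ℝ) → FormAlgebra n) (α : (Fin n → ℝ) → ℝ)
    (hη1 : ∀ x ∈ U, η x ∈ ⋀[ℝ]^1 (Module.Dual ℝ (Fin n → ℝ)))
    (hΦ2 : ∀ x ∈ U, Φ x ∈ ⋀[ℝ]^2 (Module.Dual ℝ (Fin n → ℝ)))
    (hηs : ContDiffOn ℝ (⊤ : ℕ∞) η U) (hΦs : ContDiffOn ℝ (⊤ : ℕ∞) Φ U)
    (hαs : ContDiffOn ℝ (⊤ : ℕ∞) α U)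
    (hηcl : ∀ x ∈ U, extDeriv' η x = 0)
    (hvol : ∀ x ∈ U, η x * Φ x ^ m ≠ 0)
    (heq : ∀ x ∈ U, extDeriv' Φ x = (2 * α x) • (η x * Φ x)) :
    (∀ x ∈ U, extDeriv' (fun y => (2 * α y) • η y) x = 0) ∧
    (∀ x ∈ U, extDeriv' (fun y => algebraMap ℝ (FormAlgebra n) (α y)) x * η x = 0) ∧
    (∀ x ∈ U, ∃ c : ℝ,
      extDeriv' (fun y => algebraMap ℝ (FormAlgebra n) (α y)) x = c • η x) :=
  statement18_general m hm n U hU η Φ α hη1 hηs hΦs hαs hηcl hvol heq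
end
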